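/- arXiv:2502.06712 — 10 statements merged into one kernel-verified Lean document; each statement's English description precedes it below -/
import Mathlib

section
/- Let f be a one-variable formal power series over ℝ with finite order d ∈ ℕ, and let n ≥ 1. Then there exists a power series g over ℝ with g^n = f if and only if there exists a power series r over ℝ with r^n = f_d·x^d, where f_d is the coefficient of x^d in f (the first nonzero coefficient of f). -/
/-!
Write `f = X^d * u` with `u(0) = f_d ≠ 0`. An `n`-th root `g` of `f` has order `e` with
`n * e = d`, and the initial term of `g ^ n` is the `n`-th power of the initial term of `g`,
so `f_d x^d = (g_e x^e)^n`. Conversely, a root `r` of `f_d x^d` has order `e` with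
`n * e = d` and `r_e ^ n = f_d`; since `n` is invertible, Hensel's lemma for the
`X`-adically complete ring `ℝ⟦X⟧` lifts the root `r_e` of `T^n - f_d` to a root `w` of
`T^n - u`, and then `(X^e * w)^n = f`.
-/

open PowerSeries

namespace PowerSeries

variable {R : Type*}

theorem coeff_mul_pow_of_order_eq [CommSemiring R] {g : R⟦X⟧} {e : ℕ} (hg : g.order = e)
    (n : ℕ) : coeff (n * e) (g ^ n) = coeff e g ^ n := by
  have he : g.order.toNat = e := by simp [hg]
  have hg' : g = X ^ e * divXPowOrder g := by rw [← he, X_pow_order_mul_divXPowOrder]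
  conv_lhs => rw [hg', mul_pow, ← pow_mul, mul_comm e n]
  rw [coeff_X_pow_mul', if_pos le_rfl, Nat.sub_self, coeff_zero_eq_constantCoeff, map_pow,
    constantCoeff_divXPowOrder, he]

theorem exists_order_eq_of_order_pow_eq [Semiring R] [NoZeroDivisors R] [Nontrivial R]
    {g : R⟦X⟧} {n d : ℕ} (hn : n ≠ 0) (h : (g ^ n).order = d) :
    ∃ e : ℕ, g.order = e ∧ n * e = d := by
  rw [order_pow] at h
  generalize g.order = o at h ⊢
  induction o using ENat.recTopCoe with
  | top => simp [hn] at h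
  | coe e => exact ⟨e, rfl, by rwa [nsmul_eq_mul, ← Nat.cast_mul, Nat.cast_inj] at h⟩

theorem exists_pow_eq_of_constantCoeff_eq_pow [CommRing R] {u : R⟦X⟧} {c : R} {n : ℕ}
    (hn : IsUnit (n : R)) (hc : IsUnit c) (hu : constantCoeff u = c ^ n) :
    ∃ w : R⟦X⟧, w ^ n = u := by
  rcases eq_or_ne n 0 with rfl | hn0
  · have : Subsingleton R := subsingleton_of_zero_eq_one (isUnit_zero_iff.mp (by simpa using hn))
    exact ⟨u, Subsingleton.elim _ _⟩
  have h_root : (Polynomial.X ^ n - Polynomial.C u).eval (C c) ∈ Ideal.span {(X : R⟦X⟧)} := by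
    rw [Ideal.mem_span_singleton, X_dvd_iff]
    simp [hu]
  have h_simple : IsUnit (Ideal.Quotient.mk (Ideal.span {(X : R⟦X⟧)})
      ((Polynomial.X ^ n - Polynomial.C u).derivative.eval (C c))) := by
    refine IsUnit.map _ (isUnit_iff_constantCoeff.mpr ?_)
    simpa [Polynomial.derivative_X_pow] using hn.mul (hc.pow (n - 1))
  obtain ⟨w, hw, -⟩ := HenselianRing.is_henselian _ (Polynomial.monic_X_pow_sub_C u hn0) _
    h_root h_simple
  exact ⟨w, by simpa [sub_eq_zero] using hw⟩

theorem exists_pow_eq_iff_exists_pow_eq_monomial {K : Type*} [Field K] {f : K⟦X⟧} {d n : ℕ}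
    (hd : f.order = d) (hn : (n : K) ≠ 0) :
    (∃ g : K⟦X⟧, g ^ n = f) ↔ ∃ r : K⟦X⟧, r ^ n = monomial d (coeff d f) := by
  have hn0 : n ≠ 0 := by rintro rfl; simp at hn
  constructor
  · rintro ⟨g, rfl⟩
    obtain ⟨e, he, rfl⟩ := exists_order_eq_of_order_pow_eq hn0 hd
    exact ⟨monomial e (coeff e g), by rw [monomial_pow, coeff_mul_pow_of_order_eq he]⟩
  · rintro ⟨r, hr⟩
    have hfd : coeff d f ≠ 0 := (order_eq_nat.mp hd).1
    obtain ⟨e, he, rfl⟩ := exists_order_eq_of_order_pow_eq hn0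
      (by rw [hr, order_monomial_of_ne_zero _ _ hfd])
    have hre : coeff e r ^ n = coeff (n * e) f := by
      rw [← coeff_mul_pow_of_order_eq he, hr, coeff_monomial_same]
    have hfe : f.order.toNat = n * e := by simp [hd]
    obtain ⟨w, hw⟩ := exists_pow_eq_of_constantCoeff_eq_pow (u := divXPowOrder f)
      hn.isUnit (order_eq_nat.mp he).1.isUnit (by rw [constantCoeff_divXPowOrder, hfe, hre])
    refine ⟨X ^ e * w, ?_⟩
    rw [mul_pow, ← pow_mul, hw, mul_comm e n, ← hfe, X_pow_order_mul_divXPowOrder]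

end PowerSeries

/-- A one-variable formal power series over `ℝ` of finite order `d` has an `n`-th
root if and only if the monomial `f_d · x^d` (its initial term) has an `n`-th root. -/
theorem exists_nthRoot_iff_initial_term {f : PowerSeries ℝ} {d : ℕ}
    (hd : f.order = (d : ℕ∞)) {n : ℕ} (hn : 1 ≤ n) :
    (∃ g : PowerSeries ℝ, g ^ n = f) ↔
      (∃ r : PowerSeries ℝ, r ^ n = PowerSeries.monomial d (PowerSeries.coeff d f)) :=
  exists_pow_eq_iff_exists_pow_eq_monomial hd (Nat.cast_ne_zero.mpr (by omega))
end

section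
/- Let q ≥ 1, let f be a formal power series in q variables over ℝ with nonzero constant coefficient f_θ (where θ is the zero multi-index), and let n ≥ 1. Then there exists a q-fps g over ℝ with g^n = f if and only if there exists t ∈ ℝ with t^n = f_θ. -/
/-!
Hensel's lemma in the `X`-adically complete ring `R⟦X⟧`, applied to `T ^ n - (1 + X)` at the
approximate root `1`, gives an `n`-th root of `1 + X` as soon as `n` is invertible in `R`.
Substituting `f / c - 1` for `X`, where `c = t ^ n` is the constant coefficient of `f`, yields an
`n`-th root of `f / c`, and multiplying it by `t` yields one of `f`.
-/

open PowerSeries in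
theorem PowerSeries.exists_pow_eq_one_add_X {R : Type*} [CommRing R] {n : ℕ}
    (hn : IsUnit (n : R)) : ∃ r : R⟦X⟧, r ^ n = 1 + X := by
  rcases Nat.eq_zero_or_pos n with rfl | hpos
  · have : Subsingleton R := subsingleton_of_zero_eq_one (by simpa using hn)
    exact ⟨0, Subsingleton.elim _ _⟩
  let p : Polynomial R⟦X⟧ := .X ^ n - .C (1 + X)
  have hp : p.Monic := Polynomial.monic_X_pow_sub_C _ hpos.ne'
  have hp_eval : p.eval 1 ∈ Ideal.span {X} := by simp [p]
  have hp_deriv : IsUnit (Ideal.Quotient.mk (Ideal.span {X}) (p.derivative.eval 1)) := by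
    have : p.derivative.eval 1 = C (n : R) := by simp [p, Polynomial.derivative_X_pow]
    exact this ▸ (hn.map C).map _
  obtain ⟨r, hr, -⟩ := HenselianRing.is_henselian p hp 1 hp_eval hp_deriv
  exact ⟨r, by simpa [p, sub_eq_zero] using hr⟩

namespace MvPowerSeries

variable {σ R : Type*} [CommRing R] {n : ℕ}

theorem exists_pow_eq_of_constantCoeff_eq_one (hn : IsUnit (n : R)) {f : MvPowerSeries σ R}
    (hf : constantCoeff f = 1) : ∃ g : MvPowerSeries σ R, g ^ n = f := by
  obtain ⟨r, hr⟩ := PowerSeries.exists_pow_eq_one_add_X hn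
  have ha : PowerSeries.HasSubst (f - 1) :=
    PowerSeries.HasSubst.of_constantCoeff_zero (by simp [hf])
  refine ⟨PowerSeries.substAlgHom ha r, ?_⟩
  rw [← map_pow, hr, map_add, map_one, PowerSeries.substAlgHom_X, add_sub_cancel]

theorem exists_pow_eq_of_constantCoeff_eq_pow (hn : IsUnit (n : R)) {t : R} (ht : IsUnit t)
    {f : MvPowerSeries σ R} (hf : constantCoeff f = t ^ n) :
    ∃ g : MvPowerSeries σ R, g ^ n = f := by
  obtain ⟨u, rfl⟩ := ht
  obtain ⟨g, hg⟩ := exists_pow_eq_of_constantCoeff_eq_one hn (f := C ((↑u⁻¹ : R) ^ n) * f)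
    (by rw [map_mul, constantCoeff_C, hf, ← mul_pow, Units.inv_mul, one_pow])
  refine ⟨C (u : R) * g, ?_⟩
  rw [mul_pow, hg, ← mul_assoc, ← map_pow, ← map_mul, ← mul_pow, Units.mul_inv, one_pow,
    map_one, one_mul]

end MvPowerSeries

theorem exists_nthRoot_iff_constantCoeff_general {q n : ℕ} (hn : 1 ≤ n)
    (f : MvPowerSeries (Fin q) ℝ)
    (hf : MvPowerSeries.constantCoeff f ≠ 0) :
    (∃ g : MvPowerSeries (Fin q) ℝ, g ^ n = f) ↔
      ∃ t : ℝ, t ^ n = MvPowerSeries.constantCoeff f := by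
  constructor
  · rintro ⟨g, rfl⟩
    exact ⟨MvPowerSeries.constantCoeff g, (map_pow _ _ _).symm⟩
  · rintro ⟨t, ht⟩
    have hnR : IsUnit (n : ℝ) := isUnit_iff_ne_zero.mpr (by positivity)
    have htR : IsUnit t := (isUnit_pow_iff (by omega)).mp (ht ▸ hf).isUnit
    exact MvPowerSeries.exists_pow_eq_of_constantCoeff_eq_pow hnR htR ht.symm

/-- A unit multivariable formal power series over `ℝ` (nonzero constant coefficient)
has an `n`-th root if and only if its constant coefficient has an `n`-th root in `ℝ`. -/
theorem exists_nthRoot_iff_constantCoeff {q n : ℕ} (hq : 1 ≤ q) (hn : 1 ≤ n)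
    (f : MvPowerSeries (Fin q) ℝ)
    (hf : MvPowerSeries.constantCoeff f ≠ 0) :
    (∃ g : MvPowerSeries (Fin q) ℝ, g ^ n = f) ↔
      ∃ t : ℝ, t ^ n = MvPowerSeries.constantCoeff f :=
  exists_nthRoot_iff_constantCoeff_general hn f hf
end

section
/- Let q ≥ 1, let f be a formal power series in q variables over ℝ with nonzero constant coefficient f_θ, let n ≥ 1, and let t ∈ ℝ satisfy t^n = f_θ. Then there exists a q-fps g over ℝ with g^n = f and with constant coefficient g_θ = t. -/
/-!
Write `f = f_θ • (1 + h)` with `h` without constant term. The binomial series `(1 + X) ^ (1 / n)`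
has `n`-th power `1 + X`, so substituting `h` for `X` gives an `n`-th root of
`1 + h` with constant coefficient `1`; multiplying it by `t` gives the root of `f`.
-/

namespace PowerSeries

theorem binomialSeries_nsmul {R A : Type*} [CommRing R] [BinomialRing R] [Ring A] [Algebra R A]
    (r : R) (k : ℕ) : binomialSeries A (k • r) = binomialSeries A r ^ k := by
  induction k with
  | zero => simp
  | succ k ih => rw [succ_nsmul, binomialSeries_add, ih, pow_succ]

theorem constantCoeff_subst_of_constantCoeff_eq_zero {σ A : Type*} [CommRing A]
    {a : MvPowerSeries σ A} (ha : MvPowerSeries.constantCoeff a = 0) (f : A⟦X⟧) :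
    MvPowerSeries.constantCoeff (f.subst a) = constantCoeff f := by
  have hsub : HasSubst a := .of_constantCoeff_zero ha
  have hf : f = C (constantCoeff f) + (f - C (constantCoeff f)) := by ring
  rw [hf, subst_add hsub, subst_C, map_add, constantCoeff_subst_eq_zero ha _ (by simp)]
  simp

theorem binomialSeries_inv_natCast_pow {A : Type*} [CommRing A] [Algebra ℚ A] {n : ℕ}
    (hn : n ≠ 0) :
    binomialSeries A (n : ℚ)⁻¹ ^ n = 1 + X := by
  rw [← binomialSeries_nsmul, nsmul_eq_mul, mul_inv_cancel₀ (by exact_mod_cast hn),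
    ← Nat.cast_one, binomialSeries_nat, pow_one]

end PowerSeries

namespace MvPowerSeries

variable {σ A : Type*} [CommRing A] [Algebra ℚ A]

theorem exists_pow_eq_one_add_of_constantCoeff_eq_zero {n : ℕ} (hn : n ≠ 0)
    {h : MvPowerSeries σ A} (h0 : constantCoeff h = 0) :
    ∃ g : MvPowerSeries σ A, g ^ n = 1 + h ∧ constantCoeff g = 1 := by
  have hsub : PowerSeries.HasSubst h := .of_constantCoeff_zero h0
  refine ⟨(PowerSeries.binomialSeries A (n : ℚ)⁻¹).subst h, ?_, ?_⟩
  · rw [← PowerSeries.subst_pow hsub, PowerSeries.binomialSeries_inv_natCast_pow hn,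
      PowerSeries.subst_add hsub, PowerSeries.subst_X hsub, ← map_one PowerSeries.C,
      PowerSeries.subst_C, map_one]
  · rw [PowerSeries.constantCoeff_subst_of_constantCoeff_eq_zero h0,
      PowerSeries.binomialSeries_constantCoeff]

theorem exists_pow_eq_of_isUnit_constantCoeff {n : ℕ} (hn : n ≠ 0) {f : MvPowerSeries σ A}
    (hf : IsUnit (constantCoeff f)) {t : A} (ht : t ^ n = constantCoeff f) :
    ∃ g : MvPowerSeries σ A, g ^ n = f ∧ constantCoeff g = t := by
  obtain ⟨u, hu⟩ := hf
  obtain ⟨g, hg, hg0⟩ := exists_pow_eq_one_add_of_constantCoeff_eq_zero hn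
    (h := C (↑u⁻¹ : A) * f - 1) (by simp [← hu])
  refine ⟨C t * g, ?_, by simp [hg0]⟩
  rw [mul_pow, hg, ← map_pow, ht, add_sub_cancel, ← mul_assoc, ← map_mul, ← hu, Units.mul_inv,
    map_one, one_mul]

end MvPowerSeries

theorem exists_nthRoot_with_constantCoeff_general {q n : ℕ} (hn : 1 ≤ n)
    (f : MvPowerSeries (Fin q) ℝ)
    (hf : MvPowerSeries.constantCoeff f ≠ 0)
    (t : ℝ) (ht : t ^ n = MvPowerSeries.constantCoeff f) :
    ∃ g : MvPowerSeries (Fin q) ℝ,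
      g ^ n = f ∧ MvPowerSeries.constantCoeff g = t :=
  MvPowerSeries.exists_pow_eq_of_isUnit_constantCoeff (by omega) hf.isUnit ht

/-- If `f` is a unit multivariable formal power series over `ℝ` and `t ∈ ℝ` satisfies
`t ^ n = f_θ`, then `f` has an `n`-th root `g` with constant coefficient `t`. -/
theorem exists_nthRoot_with_constantCoeff {q n : ℕ} (hq : 1 ≤ q) (hn : 1 ≤ n)
    (f : MvPowerSeries (Fin q) ℝ)
    (hf : MvPowerSeries.constantCoeff f ≠ 0)
    (t : ℝ) (ht : t ^ n = MvPowerSeries.constantCoeff f) :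
    ∃ g : MvPowerSeries (Fin q) ℝ,
      g ^ n = f ∧ MvPowerSeries.constantCoeff g = t :=
  exists_nthRoot_with_constantCoeff_general hn f hf t ht
end

section
/- Let q ≥ 1, let a ∈ ℝ with a ≠ 0, let α ∈ ℕ^q, and let n ≥ 1. The monomial q-fps a·X^α has an n-th root in MvPowerSeries (Fin q) ℝ if and only if n divides every component of α and there exists t ∈ ℝ with t^n = a. -/
/-!
The lexicographic order of a power series over a domain is additive, so `g ^ n = a • X ^ α`
forces `α = n • β` for the leading exponent `β` of `g`, and comparing the coefficients at `α`
gives `(coeff β g) ^ n = a`. Conversely `(t • X ^ β) ^ n = t ^ n • X ^ (n • β)`.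
-/

open Finsupp

theorem Finsupp.exists_nsmul_eq_iff_forall_dvd {σ : Type*} {n : ℕ} (α : σ →₀ ℕ) :
    (∃ β : σ →₀ ℕ, n • β = α) ↔ ∀ i, n ∣ α i := by
  constructor
  · rintro ⟨β, rfl⟩ i
    exact ⟨β i, rfl⟩
  · intro hdvd
    refine ⟨α.mapRange (· / n) (Nat.zero_div n), ?_⟩
    ext i
    exact Nat.mul_div_cancel' (hdvd i)

namespace MvPowerSeries

variable {σ R : Type*} [LinearOrder σ] [WellFoundedGT σ]

theorem lexOrder_monomial [Semiring R] (d : σ →₀ ℕ) {a : R} (ha : a ≠ 0) :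
    lexOrder (monomial d a) = toLex d := by
  classical
  refine le_antisymm (lexOrder_le_of_coeff_ne_zero (by rwa [coeff_monomial_same])) ?_
  rw [le_lexOrder_iff]
  intro e he
  rw [coeff_monomial, if_neg]
  rintro rfl
  exact lt_irrefl _ (WithTop.coe_lt_coe.mp he)

theorem lexOrder_one [Semiring R] [Nontrivial R] : lexOrder (1 : MvPowerSeries σ R) = 0 := by
  rw [← monomial_zero_one, lexOrder_monomial _ one_ne_zero]
  rfl

section Domain

variable [Semiring R] [NoZeroDivisors R] [Nontrivial R]

theorem lexOrder_pow (φ : MvPowerSeries σ R) (n : ℕ) : lexOrder (φ ^ n) = n • lexOrder φ := by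
  induction n with
  | zero => rw [pow_zero, zero_smul, lexOrder_one]
  | succ k ih => rw [pow_succ, lexOrder_mul, ih, succ_nsmul]

theorem coeff_pow_of_lexOrder {φ : MvPowerSeries σ R} {d : σ →₀ ℕ}
    (h : lexOrder φ = toLex d) (n : ℕ) : coeff (n • d) (φ ^ n) = coeff d φ ^ n := by
  induction n with
  | zero => simp
  | succ k ih =>
    have hk : lexOrder (φ ^ k) = toLex (k • d) := by
      rw [lexOrder_pow, h]
      rfl
    rw [pow_succ, succ_nsmul, coeff_mul_of_add_lexOrder hk h, ih, pow_succ]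

end Domain

theorem exists_pow_eq_monomial_iff [CommSemiring R] [NoZeroDivisors R] [Nontrivial R]
    {n : ℕ} (hn : n ≠ 0) {a : R} (ha : a ≠ 0) (α : σ →₀ ℕ) :
    (∃ g : MvPowerSeries σ R, g ^ n = monomial α a) ↔
      (∃ β : σ →₀ ℕ, n • β = α) ∧ ∃ t : R, t ^ n = a := by
  constructor
  · rintro ⟨g, hg⟩
    have hg0 : g ≠ 0 := by
      rintro rfl
      apply ha
      simpa [zero_pow hn] using (congrArg (coeff α) hg).symm
    obtain ⟨β, hβ⟩ := exists_finsupp_eq_lexOrder_of_ne_zero hg0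
    have hα : n • β = α := by
      have h := lexOrder_pow g n
      rw [hg, lexOrder_monomial α ha, hβ] at h
      exact (toLex.injective (WithTop.coe_injective h)).symm
    refine ⟨⟨β, hα⟩, coeff β g, ?_⟩
    rw [← coeff_pow_of_lexOrder hβ, hα, hg, coeff_monomial_same]
  · rintro ⟨⟨β, rfl⟩, t, rfl⟩
    exact ⟨monomial β t, monomial_pow β t n⟩

end MvPowerSeries

theorem monomial_exists_nthRoot_iff_general {q n : ℕ} (hn : 1 ≤ n)
    (a : ℝ) (ha : a ≠ 0) (α : Fin q →₀ ℕ) :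
    (∃ g : MvPowerSeries (Fin q) ℝ, g ^ n = MvPowerSeries.monomial α a) ↔
      ((∀ i : Fin q, n ∣ α i) ∧ ∃ t : ℝ, t ^ n = a) := by
  rw [MvPowerSeries.exists_pow_eq_monomial_iff (by omega) ha, exists_nsmul_eq_iff_forall_dvd]

/-- The monomial `a · X^α` (with `a ≠ 0`) has an `n`-th root in
`MvPowerSeries (Fin q) ℝ` if and only if `n` divides every component of `α`
and `a` has an `n`-th root in `ℝ`. -/
theorem monomial_exists_nthRoot_iff {q n : ℕ} (hq : 1 ≤ q) (hn : 1 ≤ n)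
    (a : ℝ) (ha : a ≠ 0) (α : Fin q →₀ ℕ) :
    (∃ g : MvPowerSeries (Fin q) ℝ, g ^ n = MvPowerSeries.monomial α a) ↔
      ((∀ i : Fin q, n ∣ α i) ∧ ∃ t : ℝ, t ^ n = a) :=
  monomial_exists_nthRoot_iff_general hn a ha α
end

section
/- Let q ≥ 1, let n ≥ 1, and let f be a formal power series in q variables over ℝ with ord f = m ∈ ℕ, m > 0. Suppose that the initial block of f is a single monomial f_α·X^α for some multi-index α with |α| = m (i.e., f_c = 0 for all c ≠ α with |c| = m), and that there exists a q-fps g with constant coefficient g_θ = 1 such that f = (f_α·X^α)·g. Then f possesses an n-th root if and only if f_α·X^α possesses an n-th root. -/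
/-!
Since `g` has constant coefficient `1`, it has an `n`-th root `s`: substitute `g - 1` into the
binomial series of `(1 + X) ^ (1 / n)`. Then `s` is a unit and `f = M * s ^ n` for the monomial
`M = f_α X^α`, so `h ↦ h * s⁻¹` and `r ↦ r * s` exchange the `n`-th roots of `f` and of `M`.
-/

theorem PowerSeries.binomialSeries_nsmul_s6 {R A : Type*} [CommRing R] [BinomialRing R] [Ring A]
    [Algebra R A] (n : ℕ) (r : R) : binomialSeries A (n • r) = binomialSeries A r ^ n := by
  induction n with
  | zero => simp
  | succ n ih => rw [succ_nsmul, binomialSeries_add, ih, pow_succ]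

theorem MvPowerSeries.exists_pow_eq_of_constantCoeff_eq_one_s6 {σ A : Type*} [CommRing A]
    [Algebra ℚ A] {n : ℕ} (hn : n ≠ 0) {g : MvPowerSeries σ A} (hg : constantCoeff g = 1) :
    ∃ s, s ^ n = g := by
  have hsubst : PowerSeries.HasSubst (g - 1) := .of_constantCoeff_zero (by simp [hg])
  refine ⟨PowerSeries.substAlgHom hsubst (PowerSeries.binomialSeries ℚ (n⁻¹ : ℚ)), ?_⟩
  have hroot : PowerSeries.binomialSeries ℚ (n⁻¹ : ℚ) ^ n = 1 + PowerSeries.X := by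
    rw [← PowerSeries.binomialSeries_nsmul_s6, nsmul_eq_mul, mul_inv_cancel₀ (by exact_mod_cast hn),
      ← Nat.cast_one, PowerSeries.binomialSeries_nat, pow_one]
  rw [← map_pow, hroot, map_add, map_one, PowerSeries.substAlgHom_X, add_sub_cancel]

theorem IsUnit.exists_pow_eq_mul_pow_iff {M : Type*} [CommMonoid M] {u : M} (hu : IsUnit u)
    (a : M) (n : ℕ) : (∃ x, x ^ n = a * u ^ n) ↔ ∃ y, y ^ n = a := by
  obtain ⟨u, rfl⟩ := hu
  refine ⟨fun ⟨x, hx⟩ ↦ ⟨x * ↑u⁻¹, ?_⟩, fun ⟨y, hy⟩ ↦ ⟨y * u, by rw [mul_pow, hy]⟩⟩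
  rw [mul_pow, hx, mul_assoc, ← mul_pow, Units.mul_inv, one_pow, mul_one]

theorem exists_nthRoot_iff_monomial_initial_block_general {q n : ℕ} (hn : 1 ≤ n)
    (f g : MvPowerSeries (Fin q) ℝ) (α : Fin q →₀ ℕ)
    (hgθ : MvPowerSeries.constantCoeff g = 1)
    (hfact : f = (MvPowerSeries.monomial α (MvPowerSeries.coeff α f)) * g) :
    (∃ h : MvPowerSeries (Fin q) ℝ, h ^ n = f) ↔
      (∃ r : MvPowerSeries (Fin q) ℝ,
        r ^ n = MvPowerSeries.monomial α (MvPowerSeries.coeff α f)) := by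
  have hn₀ : n ≠ 0 := Nat.one_le_iff_ne_zero.mp hn
  obtain ⟨s, rfl⟩ := MvPowerSeries.exists_pow_eq_of_constantCoeff_eq_one_s6 hn₀ hgθ
  have hs : IsUnit s :=
    (isUnit_pow_iff hn₀).mp (MvPowerSeries.isUnit_iff_constantCoeff.mpr (hgθ ▸ isUnit_one))
  generalize MvPowerSeries.monomial α (MvPowerSeries.coeff α f) = M at hfact ⊢
  subst hfact
  exact hs.exists_pow_eq_mul_pow_iff M n

/-- If a multivariable formal power series `f` over `ℝ` of positive order `m` has
initial block a single monomial `f_α · X^α` (`|α| = m`) and factors as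
`f = (f_α · X^α) · g` with `g_θ = 1`, then `f` has an `n`-th root if and only if
the monomial `f_α · X^α` has an `n`-th root. -/
theorem exists_nthRoot_iff_monomial_initial_block {q n m : ℕ} (hq : 1 ≤ q) (hn : 1 ≤ n)
    (hm : 0 < m) (f g : MvPowerSeries (Fin q) ℝ) (α : Fin q →₀ ℕ)
    (hord : f.order = (m : ℕ∞)) (hα : α.degree = m)
    (hblock : ∀ c : Fin q →₀ ℕ, c.degree = m → c ≠ α → MvPowerSeries.coeff c f = 0)
    (hgθ : MvPowerSeries.constantCoeff g = 1)
    (hfact : f = (MvPowerSeries.monomial α (MvPowerSeries.coeff α f)) * g) :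
    (∃ h : MvPowerSeries (Fin q) ℝ, h ^ n = f) ↔
      (∃ r : MvPowerSeries (Fin q) ℝ,
        r ^ n = MvPowerSeries.monomial α (MvPowerSeries.coeff α f)) :=
  exists_nthRoot_iff_monomial_initial_block_general hn f g α hgθ hfact
end

section
/- Let q ≥ 1, let n ≥ 1, and let f be a formal power series in q variables over ℝ with ord f = m ∈ ℕ, m > 0, whose initial block is a single monomial f_α·X^α (|α| = m), and suppose f = (f_α·X^α)·g for some q-fps g with g_θ = 1. If h is a q-fps with h^n = f, then n·(ord h) = m, the initial block of h is a single monomial h_{c̄}·X^{c̄} for some multi-index c̄ with |c̄| = ord h, and moreover (h_{c̄})^n = f_α and n·c̄ = α (componentwise). -/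
/-!
Over a domain the order is additive and the initial form (lowest homogeneous component) is
multiplicative, so `n · ord h = ord f` and the initial form `H` of `h` satisfies `H ^ n = f_α X^α`. For any injective additive
map `ψ` from exponents to an ordered cancellative monoid, the `ψ`-minimal exponent `c` of a
power series has `n • c` as the `ψ`-minimal exponent of its `n`-th power, with coefficient the
`n`-th power. Taking `ψ` to be the lexicographic order and its dual on the finite support of `H`,
both the lex-smallest and the lex-largest exponent of `H` are `α / n`, so `H` is a monomial.
-/

open Finset

namespace MvPowerSeries

variable {σ R : Type*} [CommSemiring R]

theorem order_pow [NoZeroDivisors R] [Nontrivial R] (φ : MvPowerSeries σ R) (n : ℕ) :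
    (φ ^ n).order = n • φ.order := by
  simpa using order_prod (fun _ => φ) (range n)

theorem homogeneousComponent_pow_of_le_order {φ : MvPowerSeries σ R} {s : ℕ}
    (hs : (s : ℕ∞) ≤ φ.order) (n : ℕ) :
    homogeneousComponent (n * s) (φ ^ n) = homogeneousComponent s φ ^ n := by
  induction n with
  | zero =>
    classical
    ext d
    simp only [zero_mul, pow_zero, coeff_homogeneousComponent, coeff_one]
    split_ifs with hd h0 h0 <;> simp_all
  | succ n ih =>
    have hpow : ((n * s : ℕ) : ℕ∞) ≤ (φ ^ n).order :=
      le_trans (by simpa using mul_le_mul_right hs (n : ℕ∞)) (le_order_pow n)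
    rw [add_one_mul, pow_succ, homogeneousComponent_mul_of_le_order hpow hs, ih, pow_succ]

theorem homogeneousComponent_eq_monomial {φ : MvPowerSeries σ R} {m : ℕ} {α : σ →₀ ℕ}
    (hα : α.degree = m) (hφ : ∀ c : σ →₀ ℕ, c.degree = m → c ≠ α → coeff c φ = 0) :
    homogeneousComponent m φ = monomial α (coeff α φ) := by
  classical
  ext c
  rw [coeff_homogeneousComponent, coeff_monomial]
  split_ifs with hc hcα hcα
  · rw [hcα]
  · exact hφ c hc hcα
  · exact absurd (hcα ▸ hα) hc
  · rfl

section ExtremalExponent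

variable {M : Type*} [AddCommMonoid M] [PartialOrder M] [IsOrderedCancelAddMonoid M]
  {ψ : (σ →₀ ℕ) →+ M} {φ χ : MvPowerSeries σ R} {a b : σ →₀ ℕ}

theorem le_of_coeff_mul_ne_zero (ha : ∀ c, coeff c φ ≠ 0 → ψ a ≤ ψ c)
    (hb : ∀ c, coeff c χ ≠ 0 → ψ b ≤ ψ c) {c : σ →₀ ℕ} (hc : coeff c (φ * χ) ≠ 0) :
    ψ (a + b) ≤ ψ c := by
  classical
  rw [coeff_mul] at hc
  obtain ⟨p, hp, hne⟩ := exists_ne_zero_of_sum_ne_zero hc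
  rw [← mem_antidiagonal.mp hp, map_add, map_add]
  exact add_le_add (ha _ (left_ne_zero_of_mul hne)) (hb _ (right_ne_zero_of_mul hne))

theorem coeff_add_mul_of_forall_le (hψ : Function.Injective ψ)
    (ha : ∀ c, coeff c φ ≠ 0 → ψ a ≤ ψ c) (hb : ∀ c, coeff c χ ≠ 0 → ψ b ≤ ψ c) :
    coeff (a + b) (φ * χ) = coeff a φ * coeff b χ := by
  classical
  rw [coeff_mul, sum_eq_single_of_mem (a, b) (mem_antidiagonal.mpr rfl)]
  rintro ⟨a', b'⟩ hp hne
  by_contra hprod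
  have ha' := ha a' (left_ne_zero_of_mul hprod)
  have hb' := hb b' (right_ne_zero_of_mul hprod)
  have hsum : ψ a + ψ b = ψ a' + ψ b' := by
    rw [← map_add, ← map_add, mem_antidiagonal.mp hp]
  obtain ⟨hψa, hψb⟩ := (add_eq_add_iff_eq_and_eq ha' hb').mp hsum
  exact hne (Prod.ext (hψ hψa).symm (hψ hψb).symm)

theorem le_of_coeff_pow_ne_zero (ha : ∀ c, coeff c φ ≠ 0 → ψ a ≤ ψ c) (n : ℕ) :
    ∀ c, coeff c (φ ^ n) ≠ 0 → ψ (n • a) ≤ ψ c := by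
  classical
  induction n with
  | zero =>
    intro c hc
    rw [pow_zero, coeff_one] at hc
    obtain rfl : c = 0 := by
      by_contra h₀
      exact hc (if_neg h₀)
    simp
  | succ n ih =>
    intro c hc
    rw [pow_succ] at hc
    exact succ_nsmul a n ▸ le_of_coeff_mul_ne_zero ih ha hc

theorem coeff_nsmul_pow_of_forall_le (hψ : Function.Injective ψ)
    (ha : ∀ c, coeff c φ ≠ 0 → ψ a ≤ ψ c) (n : ℕ) :
    coeff (n • a) (φ ^ n) = coeff a φ ^ n := by
  induction n with
  | zero => simp
  | succ n ih =>
    rw [succ_nsmul, pow_succ, coeff_add_mul_of_forall_le hψ (le_of_coeff_pow_ne_zero ha n) ha,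
      ih, pow_succ]

theorem nsmul_eq_of_pow_eq_monomial [NoZeroDivisors R] (hψ : Function.Injective ψ)
    (ha₀ : coeff a φ ≠ 0) (ha : ∀ c, coeff c φ ≠ 0 → ψ a ≤ ψ c) {n : ℕ} {α : σ →₀ ℕ} {r : R}
    (hpow : φ ^ n = monomial α r) : n • a = α := by
  classical
  by_contra hne
  have hcoeff := coeff_nsmul_pow_of_forall_le hψ ha n
  rw [hpow, coeff_monomial, if_neg hne] at hcoeff
  exact pow_ne_zero n ha₀ hcoeff.symm

end ExtremalExponent

theorem IsHomogeneous.eq_monomial_of_pow_eq_monomial [NoZeroDivisors R] [LinearOrder σ]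
    [Finite σ] {H : MvPowerSeries σ R} {s n : ℕ} {α : σ →₀ ℕ} {r : R} (hH : H.IsHomogeneous s)
    (hH₀ : H ≠ 0) (hn : n ≠ 0) (hpow : H ^ n = monomial α r) :
    ∃ β, n • β = α ∧ H = monomial β (coeff β H) := by
  classical
  set S := {c | coeff c H ≠ 0}
  have hS : S.Finite :=
    (Finsupp.finite_of_degree_le s).subset fun c hc => (not_imp_comm.mp hH.coeff_eq_zero hc).le
  have hS₀ : S.Nonempty := by
    by_contra hempty
    exact hH₀ (ext fun c => by simpa [S] using fun hc => hempty ⟨c, hc⟩)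
  obtain ⟨cmin, hcmin, hmin⟩ := S.exists_min_image toLex hS hS₀
  obtain ⟨cmax, hcmax, hmax⟩ := S.exists_max_image toLex hS hS₀
  have hαmin : n • cmin = α :=
    nsmul_eq_of_pow_eq_monomial (M := Lex (σ →₀ ℕ)) (ψ := (toLexAddEquiv _).toAddMonoidHom)
      (toLexAddEquiv _).injective hcmin hmin hpow
  have hαmax : n • cmax = α :=
    nsmul_eq_of_pow_eq_monomial (M := (Lex (σ →₀ ℕ))ᵒᵈ)
      (ψ := ((toLexAddEquiv _).trans ⟨OrderDual.toDual, toDual_add⟩).toAddMonoidHom)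
      (AddEquiv.injective _) hcmax hmax hpow
  have hminmax : cmin = cmax := nsmul_right_injective hn (hαmin.trans hαmax.symm)
  refine ⟨cmin, hαmin, ext fun c => ?_⟩
  rw [coeff_monomial]
  split_ifs with hc
  · rw [hc]
  · by_contra hcS
    exact hc (toLex.injective (le_antisymm (hminmax ▸ hmax c hcS) (hmin c hcS)))

end MvPowerSeries

open MvPowerSeries

theorem nthRoot_initial_block_monomial_general {q n m : ℕ} (hn : 1 ≤ n)
    (f h : MvPowerSeries (Fin q) ℝ) (α : Fin q →₀ ℕ)
    (hord : f.order = (m : ℕ∞)) (hα : α.degree = m)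
    (hblock : ∀ c : Fin q →₀ ℕ, c.degree = m → c ≠ α → MvPowerSeries.coeff c f = 0)
    (hh : h ^ n = f) :
    ∃ cbar : Fin q →₀ ℕ,
      h.order = (cbar.degree : ℕ∞) ∧
      n * cbar.degree = m ∧
      (∀ c : Fin q →₀ ℕ, c.degree = cbar.degree → c ≠ cbar →
        MvPowerSeries.coeff c h = 0) ∧
      (MvPowerSeries.coeff cbar h) ^ n = MvPowerSeries.coeff α f ∧
      n • cbar = α := by
  classical
  have hh₀ : h ≠ 0 := by
    rintro rfl
    rw [zero_pow (by omega)] at hh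
    simp [← hh] at hord
  obtain ⟨s, hs⟩ := ENat.ne_top_iff_exists.mp (mt order_eq_top_iff.mp hh₀)
  have hns : n * s = m := by
    have := order_pow h n
    rw [hh, hord, ← hs, nsmul_eq_mul] at this
    exact_mod_cast this.symm
  set H := homogeneousComponent s h
  have hHpow : H ^ n = monomial α (coeff α f) := by
    rw [← homogeneousComponent_pow_of_le_order hs.le, hh, hns]
    exact homogeneousComponent_eq_monomial hα hblock
  have hHhom : H.IsHomogeneous s := isHomogeneous_homogeneousComponent h s
  have hH₀ : H ≠ 0 := homogeneousComponent_of_order hs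
  obtain ⟨β, hβα, hHβ⟩ := hHhom.eq_monomial_of_pow_eq_monomial hH₀ (by omega) hHpow
  have hβ : coeff β H ≠ 0 := fun h₀ => hH₀ (by rw [hHβ, h₀, map_zero])
  have hβs : β.degree = s := by
    by_contra hne
    exact hβ (hHhom.coeff_eq_zero hne)
  have hcoeff : ∀ c : Fin q →₀ ℕ, c.degree = s → coeff c h = coeff c H := fun c hc => by
    rw [coeff_homogeneousComponent, if_pos hc]
  refine ⟨β, by rw [← hs, hβs], by rw [hβs, hns], fun c hc hne => ?_, ?_, hβα⟩
  · rw [hcoeff c (hc.trans hβs), hHβ, coeff_monomial, if_neg hne]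
  · have hαcoeff := congrArg (coeff α) hHpow
    rwa [hHβ, monomial_pow, hβα, coeff_monomial_same, coeff_monomial_same, ← hcoeff β hβs]
      at hαcoeff

/-- Suppose `f` over `ℝ` has positive order `m`, initial block a single monomial
`f_α · X^α` (`|α| = m`), and `f = (f_α · X^α) · g` with `g_θ = 1`. If `h ^ n = f`,
then `n · ord h = m`, the initial block of `h` is a single monomial `h_c̄ · X^c̄`
with `|c̄| = ord h`, `(h_c̄)^n = f_α` and `n • c̄ = α`. -/
theorem nthRoot_initial_block_monomial {q n m : ℕ} (hq : 1 ≤ q) (hn : 1 ≤ n)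
    (hm : 0 < m) (f g h : MvPowerSeries (Fin q) ℝ) (α : Fin q →₀ ℕ)
    (hord : f.order = (m : ℕ∞)) (hα : α.degree = m)
    (hblock : ∀ c : Fin q →₀ ℕ, c.degree = m → c ≠ α → MvPowerSeries.coeff c f = 0)
    (hgθ : MvPowerSeries.constantCoeff g = 1)
    (hfact : f = (MvPowerSeries.monomial α (MvPowerSeries.coeff α f)) * g)
    (hh : h ^ n = f) :
    ∃ cbar : Fin q →₀ ℕ,
      h.order = (cbar.degree : ℕ∞) ∧
      n * cbar.degree = m ∧
      (∀ c : Fin q →₀ ℕ, c.degree = cbar.degree → c ≠ cbar →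
        MvPowerSeries.coeff c h = 0) ∧
      (MvPowerSeries.coeff cbar h) ^ n = MvPowerSeries.coeff α f ∧
      n • cbar = α :=
  nthRoot_initial_block_monomial_general hn f h α hord hα hblock hh
end

section
/- Let q ≥ 1 and n ≥ 1. Suppose f and g are formal power series in q variables over ℝ such that ord f = m ∈ ℕ with m > 0, the initial block of f is a single monomial f_α·X^α with |α| = m, and f = (f_α·X^α)·g with g_θ = 1, and suppose h_{c̄} ∈ ℝ and a multi-index c̄ satisfy (h_{c̄})^n = f_α and n·c̄ = α. Then there exists a formal power series h in q variables over ℝ with n·(ord h) = m, whose initial block is the single monomial h_{c̄}·X^{c̄} with |c̄| = ord h, such that h^n = f. -/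
open Finset MvPowerSeries

namespace NthRootAux

variable {q : ℕ}

lemma degree_sum_eq {n : ℕ} (l : ℕ →₀ (Fin q →₀ ℕ)) :
    (∑ j ∈ range n, l j).degree = ∑ j ∈ range n, (l j).degree := by
  simp only [Finsupp.degree_eq_weight_one]
  exact map_sum _ _ _

lemma degree_add_eq (a b : Fin q →₀ ℕ) :
    (a + b).degree = a.degree + b.degree := by
  simp only [Finsupp.degree_eq_weight_one]
  exact map_add _ _ _

lemma eq_single_of_mem {n : ℕ} {c : Fin q →₀ ℕ}
    {l : ℕ →₀ (Fin q →₀ ℕ)} (hl : l ∈ finsuppAntidiag (range n) c)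
    {i : ℕ} (hi : i ∈ range n) (hli : l i = c) {j : ℕ} (hj : j ∈ (range n).erase i) :
    l j = 0 := by
  rw [mem_finsuppAntidiag] at hl
  have hiasum : l i + ∑ k ∈ (range n).erase i, l k = c := by
    rw [Finset.add_sum_erase (range n) (fun k => l k) hi, hl.1]
  rw [hli] at hiasum
  have hz : ∑ k ∈ (range n).erase i, l k = 0 := by
    have := hiasum
    nth_rewrite 2 [← add_zero c] at this
    exact add_left_cancel this
  exact (Finset.sum_eq_zero_iff.mp hz) j hj

lemma deg_lt {n : ℕ} {c : Fin q →₀ ℕ} (hc : c ≠ 0)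
    {l : ℕ →₀ (Fin q →₀ ℕ)} (hl : l ∈ finsuppAntidiag (range n) c)
    {i : ℕ} (hi : i ∈ range n) (hne : l i ≠ c) :
    (l i).degree < c.degree := by
  have hl' := hl
  rw [mem_finsuppAntidiag] at hl'
  have hsum : ∑ j ∈ range n, (l j).degree = c.degree := by
    rw [← degree_sum_eq, hl'.1]
  rcases lt_or_ge (l i).degree c.degree with h | h
  · exact h
  exfalso
  have hle : (l i).degree ≤ ∑ j ∈ range n, (l j).degree :=
    Finset.single_le_sum (f := fun j => (l j).degree) (fun j _ => Nat.zero_le _) hi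
  have hsplit : (l i).degree + ∑ j ∈ (range n).erase i, (l j).degree =
      ∑ j ∈ range n, (l j).degree :=
    Finset.add_sum_erase (range n) (fun j => (l j).degree) hi
  have herase : ∑ j ∈ (range n).erase i, (l j).degree = 0 := by omega
  have hzero : ∀ j ∈ (range n).erase i, l j = 0 := by
    intro j hj
    have := Finset.sum_eq_zero_iff.mp herase j hj
    exact (Finsupp.degree_eq_zero_iff _).mp this
  apply hne
  have : ∑ j ∈ range n, l j = l i := by
    rw [← Finset.add_sum_erase (range n) (fun j => l j) hi,
      Finset.sum_eq_zero hzero, add_zero]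
  rw [← hl'.1, this]

/-- Coefficients of the `n`-th root of `g`, defined by recursion on the degree. -/
noncomputable def rootFun (n : ℕ) (g : MvPowerSeries (Fin q) ℝ) (c : Fin q →₀ ℕ) : ℝ :=
  if hc : c = 0 then 1
  else (MvPowerSeries.coeff c g -
      ∑ l ∈ (((range n).finsuppAntidiag c).filter
          (fun l => ∀ i ∈ range n, l i ≠ c)).attach,
        ∏ i ∈ (range n).attach, rootFun n g (l.1 i.1)) / n
termination_by c.degree
decreasing_by
  have hl := l.2
  rw [Finset.mem_filter] at hl
  exact deg_lt hc hl.1 i.2 (hl.2 i.1 i.2)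

lemma rootFun_zero (n : ℕ) (g : MvPowerSeries (Fin q) ℝ) : rootFun n g 0 = 1 := by
  rw [rootFun]
  simp

/-- The `n`-th root as a power series. -/
noncomputable def root (n : ℕ) (g : MvPowerSeries (Fin q) ℝ) : MvPowerSeries (Fin q) ℝ :=
  fun c => rootFun n g c

lemma coeff_root (n : ℕ) (g : MvPowerSeries (Fin q) ℝ) (c : Fin q →₀ ℕ) :
    MvPowerSeries.coeff c (root n g) = rootFun n g c := rfl

lemma root_pow {n : ℕ} (hn : 1 ≤ n) {g : MvPowerSeries (Fin q) ℝ}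
    (hg : MvPowerSeries.constantCoeff g = 1) :
    (root n g) ^ n = g := by
  ext c
  rw [MvPowerSeries.coeff_pow]
  simp only [coeff_root]
  by_cases hc : c = 0
  · subst hc
    have hA : finsuppAntidiag (range n) (0 : Fin q →₀ ℕ) = {0} := by
      ext l
      simp only [mem_finsuppAntidiag, Finset.mem_singleton]
      constructor
      · rintro ⟨h1, h2⟩
        ext j s
        by_cases hj : j ∈ range n
        · have := Finset.sum_eq_zero_iff.mp h1 j hj
          simp [this]
        · simp [Finsupp.notMem_support_iff.mp (fun hs => hj (h2 hs))]
      · rintro rfl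
        simp
    rw [hA, Finset.sum_singleton]
    simp only [Finsupp.coe_zero, Pi.zero_apply, rootFun_zero]
    rw [Finset.prod_const_one]
    rw [MvPowerSeries.coeff_zero_eq_constantCoeff_apply, hg]
  · -- split the sum
    set A := finsuppAntidiag (range n) c with hA
    set P : (ℕ →₀ (Fin q →₀ ℕ)) → Prop := fun l => ∀ i ∈ range n, l i ≠ c with hP
    have hsplit := Finset.sum_filter_add_sum_filter_not A P
      (fun l => ∏ i ∈ range n, rootFun n g (l i))
    rw [← hsplit]
    -- the non-P part equals n • rootFun n g c
    have himage : A.filter (fun l => ¬ P l) = (range n).image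
        (fun i => Finsupp.single i c) := by
      ext l
      simp only [Finset.mem_filter, Finset.mem_image, hP, not_forall]
      constructor
      · rintro ⟨hlA, i, hi, hlic⟩
        rw [not_not] at hlic
        refine ⟨i, hi, ?_⟩
        ext j
        by_cases hj : j = i
        · subst hj; rw [hlic, Finsupp.single_eq_same]
        · rw [Finsupp.single_eq_of_ne hj]
          by_cases hjr : j ∈ range n
          · have := eq_single_of_mem hlA hi hlic (Finset.mem_erase.mpr ⟨hj, hjr⟩)
            simp [this]
          · rw [hA, mem_finsuppAntidiag] at hlA
            have := Finsupp.notMem_support_iff.mp (fun hs => hjr (hlA.2 hs))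
            simp [this]
      · rintro ⟨i, hi, rfl⟩
        constructor
        · rw [hA, mem_finsuppAntidiag]
          constructor
          · rw [Finset.sum_eq_single i (fun j _ hji => Finsupp.single_eq_of_ne
              hji) (fun hni => absurd hi hni)]
            exact Finsupp.single_eq_same
          · intro s hs
            have := Finsupp.support_single_subset hs
            rw [Finset.mem_singleton] at this
            rwa [this]
        · exact ⟨i, hi, by rw [not_not]; exact Finsupp.single_eq_same⟩
    have hinj : ∀ i ∈ range n, ∀ j ∈ range n,
        Finsupp.single i c = Finsupp.single j c → i = j := by
      intro i _ j _ hij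
      by_contra hne
      have := DFunLike.congr_fun hij i
      rw [Finsupp.single_eq_same, Finsupp.single_eq_of_ne hne] at this
      exact hc this
    have hprod : ∀ i ∈ range n,
        ∏ j ∈ range n, rootFun n g ((Finsupp.single i c) j) = rootFun n g c := by
      intro i hi
      rw [Finset.prod_eq_single i (fun j _ hji => by
        rw [Finsupp.single_eq_of_ne hji]
        exact rootFun_zero n g) (fun hni => absurd hi hni)]
      rw [Finsupp.single_eq_same]
    have hnotP : ∑ l ∈ A.filter (fun l => ¬ P l),
        ∏ i ∈ range n, rootFun n g (l i) = n * rootFun n g c := by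
      rw [himage, Finset.sum_image hinj, Finset.sum_congr rfl hprod,
        Finset.sum_const, Finset.card_range, nsmul_eq_mul]
    -- the P part: use the defining recursion
    have hkey : (n : ℝ) * rootFun n g c = MvPowerSeries.coeff c g -
        ∑ l ∈ A.filter P, ∏ i ∈ range n, rootFun n g (l i) := by
      rw [rootFun]
      rw [dif_neg hc]
      have hattach : ∑ l ∈ (A.filter P).attach,
          ∏ i ∈ (range n).attach, rootFun n g (l.1 i.1) =
          ∑ l ∈ A.filter P, ∏ i ∈ range n, rootFun n g (l i) := by
        rw [Finset.sum_attach (A.filter P) (fun l => ∏ i ∈ (range n).attach,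
          rootFun n g (l i.1))]
        exact Finset.sum_congr rfl (fun l _ =>
          Finset.prod_attach (range n) (fun i => rootFun n g (l i)))
      rw [hattach]
      field_simp
    rw [hnotP, hkey]
    ring

lemma monomial_pow_aux (d : Fin q →₀ ℕ) (a : ℝ) (n : ℕ) :
    (MvPowerSeries.monomial d a) ^ n =
      MvPowerSeries.monomial (n • d) (a ^ n) := by
  induction n with
  | zero => simp [MvPowerSeries.monomial_zero_one]
  | succ k ih =>
      rw [pow_succ, ih, MvPowerSeries.monomial_mul_monomial, succ_nsmul, pow_succ]

lemma degree_mono {a b : Fin q →₀ ℕ} (hab : a ≤ b) : a.degree ≤ b.degree := by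
  have : a + (b - a) = b := add_tsub_cancel_of_le hab
  calc a.degree ≤ a.degree + (b - a).degree := Nat.le_add_right _ _
    _ = b.degree := by rw [← degree_add_eq, this]

lemma eq_of_le_of_degree_le {a b : Fin q →₀ ℕ} (hab : a ≤ b)
    (hd : b.degree ≤ a.degree) : b = a := by
  have h1 : a + (b - a) = b := add_tsub_cancel_of_le hab
  have h2 : a.degree + (b - a).degree = b.degree := by rw [← degree_add_eq, h1]
  have : (b - a).degree = 0 := by omega
  have hz : b - a = 0 := (Finsupp.degree_eq_zero_iff _).mp this
  rw [← h1, hz, add_zero]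

end NthRootAux

open NthRootAux in
/-- Converse part of the paper's Theorem 3.3: suppose `f` over `ℝ` has positive
order `m`, initial block a single monomial `f_α · X^α` (`|α| = m`), and
`f = (f_α · X^α) · g` with `g_θ = 1`. If `h` satisfies `n · ord h = m`, has initial
block a single monomial `h_c̄ · X^c̄` with `|c̄| = ord h`, `(h_c̄)^n = f_α` and
`n • c̄ = α`, then there exists an `h'` extending these initial data
(agreeing with `h` on all coefficients of degree at most `|c̄|`) with `h' ^ n = f`. -/
theorem exists_nthRoot_extending_initial_block {q n m : ℕ} (hq : 1 ≤ q) (hn : 1 ≤ n)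
    (hm : 0 < m) (f g h : MvPowerSeries (Fin q) ℝ) (α cbar : Fin q →₀ ℕ)
    (hord : f.order = (m : ℕ∞)) (hα : α.degree = m)
    (hblock : ∀ c : Fin q →₀ ℕ, c.degree = m → c ≠ α → MvPowerSeries.coeff c f = 0)
    (hgθ : MvPowerSeries.constantCoeff g = 1)
    (hfact : f = (MvPowerSeries.monomial α (MvPowerSeries.coeff α f)) * g)
    (hhord : h.order = (cbar.degree : ℕ∞))
    (hnm : n * cbar.degree = m)
    (hhblock : ∀ c : Fin q →₀ ℕ, c.degree = cbar.degree → c ≠ cbar →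
      MvPowerSeries.coeff c h = 0)
    (hroot : (MvPowerSeries.coeff cbar h) ^ n = MvPowerSeries.coeff α f)
    (hcbar : n • cbar = α) :
    ∃ h' : MvPowerSeries (Fin q) ℝ,
      h' ^ n = f ∧
      ∀ c : Fin q →₀ ℕ, c.degree ≤ cbar.degree →
        MvPowerSeries.coeff c h' = MvPowerSeries.coeff c h := by
  set r := MvPowerSeries.coeff cbar h with hr
  set u := root n g with hu
  refine ⟨MvPowerSeries.monomial cbar r * u, ?_, ?_⟩
  · rw [mul_pow, monomial_pow_aux, root_pow hn hgθ, hcbar, hroot, ← hfact]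
  · intro c hcle
    rw [MvPowerSeries.coeff_monomial_mul]
    by_cases hle : cbar ≤ c
    · have hceq : c = cbar := eq_of_le_of_degree_le hle hcle
      subst hceq
      rw [if_pos le_rfl, tsub_self, coeff_root, rootFun_zero, mul_one]
    · rw [if_neg hle]
      rcases eq_or_lt_of_le hcle with hdeg | hlt
    -- degree equal
      · have hne : c ≠ cbar := fun hce => hle (hce ▸ le_rfl)
        exact (hhblock c hdeg hne).symm
      · exact (MvPowerSeries.coeff_of_lt_order (by
          rw [hhord]; exact_mod_cast hlt)).symm
end

section
/- Let q ≥ 1, n ≥ 1, and let f, g be formal power series in q variables over ℝ with ord g = m ∈ ℕ and g^n = f. Then for every multi-index c with |c| = m·n + 1, one has f_c = n · Σ_{b} g_b · (Σ ∏_{i=1}^{n-1} g_{c^i}), where the outer sum extends over all multi-indices b with |b| = m+1 and b ≤ c componentwise, and the inner sum extends over all (n−1)-tuples (c^1, …, c^{n-1}) of multi-indices satisfying |c^i| = m for every i and c^1 + … + c^{n-1} = c − b. -/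
/-!
A term `g_{c¹} ⋯ g_{cⁿ}` of the Cauchy product `(gⁿ)_c` can only be nonzero when every
`|cⁱ| ≥ m = ord g`; since the `|cⁱ|` add up to `m n + 1`, exactly one of them is then `m + 1` and
all others are `m`. Grouping the tuples by that position and removing the entry there
(`Fin.insertNth`) turns each of the `n` groups into the same double sum.
-/

open Finset MvPowerSeries

variable {σ : Type*} [DecidableEq σ]

theorem sum_finAntidiagonal_succ_eq_sum_insertNth {M : Type*} [AddCommMonoid M] {k : ℕ}
    (i₀ : Fin (k + 1)) (c : σ →₀ ℕ) (Φ : (Fin (k + 1) → σ →₀ ℕ) → M) :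
    ∑ l ∈ finAntidiagonal (k + 1) c, Φ l =
      ∑ b ∈ Iic c, ∑ d ∈ finAntidiagonal k (c - b), Φ (i₀.insertNth b d) := by
  rw [sum_sigma']
  refine sum_nbij' (fun l => ⟨l i₀, i₀.removeNth l⟩) (fun x => i₀.insertNth x.1 x.2)
    ?_ ?_ (fun l _ => Fin.insertNth_self_removeNth i₀ l) ?_ (fun l _ => by simp)
  · intro l hl
    have hsum : l i₀ + ∑ j, i₀.removeNth l j = c := by
      simpa only [Fin.removeNth_apply, ← Fin.sum_univ_succAbove l i₀] using
        mem_finAntidiagonal.1 hl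
    simp only [mem_sigma, mem_Iic, mem_finAntidiagonal]
    exact ⟨hsum ▸ le_self_add, eq_tsub_of_add_eq ((add_comm _ _).trans hsum)⟩
  · rintro ⟨b, d⟩ hbd
    simp only [mem_sigma, mem_Iic, mem_finAntidiagonal] at hbd ⊢
    rw [Fin.sum_univ_succAbove _ i₀]
    simp [hbd.2, add_tsub_cancel_of_le hbd.1]
  · rintro ⟨b, d⟩ -
    simp

theorem MvPowerSeries.coeff_pow_eq_sum_finAntidiagonal {R : Type*} [CommSemiring R]
    (g : MvPowerSeries σ R) (n : ℕ) (c : σ →₀ ℕ) :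
    coeff c (g ^ n) = ∑ l ∈ finAntidiagonal n c, ∏ i, coeff (l i) g := by
  rw [← Fin.prod_const, coeff_prod]
  exact sum_equiv Finsupp.equivFunOnFinite (by simp) (by simp)

theorem existsUnique_succAbove_of_sum_eq {k m : ℕ} (a : Fin (k + 1) → ℕ) (hm : ∀ i, m ≤ a i)
    (hsum : ∑ i, a i = m * (k + 1) + 1) :
    ∃! i₀, a i₀ = m + 1 ∧ ∀ j, a (i₀.succAbove j) = m := by
  obtain ⟨i₀, hi₀⟩ : ∃ i₀, m < a i₀ := by
    by_contra! h
    have : ∑ i, a i = ∑ _i : Fin (k + 1), m := sum_congr rfl fun i _ => (h i).antisymm (hm i)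
    simp [this, mul_comm] at hsum
  rw [Fin.sum_univ_succAbove a i₀] at hsum
  have hrest_ge : ∑ _j : Fin k, m ≤ ∑ j, a (i₀.succAbove j) := sum_le_sum fun j _ => hm _
  have hconst : ∑ _j : Fin k, m = m * k := by simp [mul_comm]
  have hrest : ∑ j, a (i₀.succAbove j) = ∑ _j : Fin k, m := by linarith
  have hrest_eq : ∀ j, a (i₀.succAbove j) = m := fun j =>
    ((sum_eq_sum_iff_of_le fun j _ => hm (i₀.succAbove j)).1 hrest.symm j (mem_univ j)).symm
  refine ⟨i₀, ⟨by linarith, hrest_eq⟩, fun i₁ ⟨hi₁, _⟩ => ?_⟩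
  by_contra hne
  obtain ⟨j, rfl⟩ := Fin.exists_succAbove_eq hne
  exact absurd hi₁ (by simp [hrest_eq j])

theorem Finset.sum_eq_sum_sum_filter_of_existsUnique {α ι M : Type*} [Fintype ι]
    [AddCommMonoid M] (s : Finset α) (F : α → M) (P : ι → α → Prop) [∀ i, DecidablePred (P i)]
    (h : ∀ a ∈ s, F a ≠ 0 → ∃! i, P i a) :
    ∑ a ∈ s, F a = ∑ i, ∑ a ∈ s with P i a, F a := by
  simp_rw [sum_filter]
  rw [sum_comm]
  refine sum_congr rfl fun a ha => ?_
  by_cases hF : F a = 0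
  · simp [hF]
  obtain ⟨i, hi, huniq⟩ := h a ha hF
  rw [Fintype.sum_eq_single i fun j hj => if_neg fun hj' => hj (huniq j hj'), if_pos hi]

theorem sum_filter_finAntidiagonal_succAbove {R : Type*} [CommSemiring R] {k : ℕ}
    (i₀ : Fin (k + 1)) (c : σ →₀ ℕ) (F : (σ →₀ ℕ) → R) (p r : (σ →₀ ℕ) → Prop)
    [DecidablePred p] [DecidablePred r] :
    ∑ l ∈ finAntidiagonal (k + 1) c with p (l i₀) ∧ ∀ j, r (l (i₀.succAbove j)), ∏ i, F (l i) =
      ∑ b ∈ Iic c with p b,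
        F b * ∑ d ∈ finAntidiagonal k (c - b) with ∀ j, r (d j), ∏ j, F (d j) := by
  rw [sum_filter, sum_finAntidiagonal_succ_eq_sum_insertNth i₀, sum_filter]
  refine sum_congr rfl fun b _ => ?_
  simp only [Fin.insertNth_apply_same, Fin.insertNth_apply_succAbove, Fin.prod_univ_succAbove _ i₀,
    sum_filter, mul_sum, ite_and]
  split_ifs <;> simp

theorem finsum_cond_and_sum_eq_sum_finAntidiagonal {μ M : Type*} [AddCommMonoid μ]
    [HasAntidiagonal μ] [DecidableEq μ] [AddCommMonoid M] {k : ℕ} (e : μ)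
    (P : (Fin k → μ) → Prop) [DecidablePred P]
    (F : (Fin k → μ) → M) :
    ∑ᶠ (d : Fin k → μ) (_ : P d ∧ ∑ i, d i = e), F d = ∑ d ∈ finAntidiagonal k e with P d, F d :=
  finsum_cond_eq_sum_of_cond_iff F fun _ => by simp [and_comm]

theorem finsum_cond_and_le_eq_sum_Iic {μ M : Type*} [Preorder μ] [LocallyFiniteOrderBot μ]
    [AddCommMonoid M] (c : μ) (p : μ → Prop) [DecidablePred p] (G : μ → M) :
    ∑ᶠ (b : μ) (_ : p b ∧ b ≤ c), G b = ∑ b ∈ Iic c with p b, G b :=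
  finsum_cond_eq_sum_of_cond_iff G fun _ => by simp [and_comm]

theorem coeff_order_succ_eq_general {q n m : ℕ} (hn : 1 ≤ n)
    (f g : MvPowerSeries (Fin q) ℝ)
    (hord : g.order = (m : ℕ∞)) (hgf : g ^ n = f) :
    ∀ c : Fin q →₀ ℕ, c.degree = m * n + 1 →
      MvPowerSeries.coeff c f =
        (n : ℝ) * ∑ᶠ (b : Fin q →₀ ℕ) (_ : b.degree = m + 1 ∧ b ≤ c),
          MvPowerSeries.coeff b g *
            ∑ᶠ (d : Fin (n - 1) → (Fin q →₀ ℕ))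
              (_ : (∀ i, (d i).degree = m) ∧ ∑ i, d i = c - b),
              ∏ i, MvPowerSeries.coeff (d i) g := by
  intro c hc
  obtain ⟨k, rfl⟩ : ∃ k, n = k + 1 := ⟨n - 1, by omega⟩
  have hunique : ∀ l ∈ finAntidiagonal (k + 1) c, ∏ i, coeff (l i) g ≠ 0 →
      ∃! i₀, (l i₀).degree = m + 1 ∧ ∀ j, (l (i₀.succAbove j)).degree = m := by
    intro l hl hne
    refine existsUnique_succAbove_of_sum_eq _ (fun i => ?_) ?_
    · exact_mod_cast hord ▸ order_le (prod_ne_zero_iff.1 hne i (mem_univ i))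
    · rw [← map_sum, mem_finAntidiagonal.1 hl, hc]
  rw [← hgf, coeff_pow_eq_sum_finAntidiagonal, sum_eq_sum_sum_filter_of_existsUnique _ _ _ hunique,
    sum_congr rfl fun i₀ _ => sum_filter_finAntidiagonal_succAbove i₀ c (coeff · g)
      (fun b => b.degree = m + 1) (fun b => b.degree = m),
    sum_const, card_univ, Fintype.card_fin, nsmul_eq_mul]
  simp only [finsum_cond_and_le_eq_sum_Iic, finsum_cond_and_sum_eq_sum_finAntidiagonal]
  -- the remaining difference is `Fin (k + 1 - 1)` versus `Fin k`
  rfl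

/-- If `g` has order `m` and `g ^ n = f` (over `ℝ`, `q` variables), then for every
multi-index `c` with `|c| = m·n + 1`,
`f_c = n · Σ_{|b| = m+1, b ≤ c} g_b · (Σ g_{c¹} ⋯ g_{cⁿ⁻¹})`, where the inner sum
runs over all `(n-1)`-tuples of multi-indices of degree `m` summing to `c - b`. -/
theorem coeff_order_succ_eq {q n m : ℕ} (hq : 1 ≤ q) (hn : 1 ≤ n)
    (f g : MvPowerSeries (Fin q) ℝ)
    (hord : g.order = (m : ℕ∞)) (hgf : g ^ n = f) :
    ∀ c : Fin q →₀ ℕ, c.degree = m * n + 1 →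
      MvPowerSeries.coeff c f =
        (n : ℝ) * ∑ᶠ (b : Fin q →₀ ℕ) (_ : b.degree = m + 1 ∧ b ≤ c),
          MvPowerSeries.coeff b g *
            ∑ᶠ (d : Fin (n - 1) → (Fin q →₀ ℕ))
              (_ : (∀ i, (d i).degree = m) ∧ ∑ i, d i = c - b),
              ∏ i, MvPowerSeries.coeff (d i) g :=
  coeff_order_succ_eq_general hn f g hord hgf
end

section
/- Let q ≥ 1, n ≥ 1, and let f, g be formal power series in q variables over ℝ with ord g = m ∈ ℕ, m > 0. Then g^n = f if and only if the following three families of identities hold: (i) for every multi-index c with |c| = m·n, f_c equals the sum of ∏_{i=1}^n g_{c^i} over all n-tuples of multi-indices with each |c^i| = m and c^1+…+c^n = c; (ii) for every c with |c| = m·n+1, f_c = n·Σ_{|b|=m+1, b≤c} g_b · Σ ∏_{i=1}^{n-1} g_{c^i}, the inner sum over (n−1)-tuples with each |c^i| = m and sum c−b; (iii) for every k ≥ 2 and every c with |c| = m·n+k, f_c = (Σ ∏_{i=1}^n g_{c^i} over n-tuples with m ≤ |c^i| ≤ m+k−1 and sum c) + n·Σ_{|b|=m+k, b≤c} g_b ·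 Σ ∏_{i=1}^{n-1} g_{c^i} (inner sum over (n−1)-tuples with each |c^i| = m and sum c−b); together with f_c = 0 for every c with |c| < m·n. -/
/-!
The coefficient of `c` in `g ^ n` is the sum, over `n`-tuples of multi-indices adding up to `c`,
of the products of the corresponding coefficients of `g`. Since `g` has no terms of degree `< m`,
only tuples whose entries all have degree `≥ m` contribute. When `|c| = m n` this forces every
entry to have degree exactly `m`. When `|c| = m n + k` with `k ≥ 1`, either every entry has
degree `< m + k`, or one entry has degree exactly `m + k` and all the others degree `m`; the
second kind of tuple is determined by the position of that entry, its value `b ≤ c`, and an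
`(n-1)`-tuple adding up to `c - b`, and each of the `n` positions gives the same sum.
-/

open Finset MvPowerSeries

theorem finsum_cond_sum_eq_eq_sum_finAntidiagonal {μ R : Type*} [AddCommMonoid μ]
    [AddCommMonoid R] [HasAntidiagonal μ] [DecidableEq μ] {N : ℕ} (P : (Fin N → μ) → Prop)
    [DecidablePred P] (F : (Fin N → μ) → R) (c : μ) :
    ∑ᶠ (d : Fin N → μ) (_ : P d ∧ ∑ i, d i = c), F d = ∑ d ∈ finAntidiagonal N c with P d, F d :=
  finsum_cond_eq_sum_of_cond_iff _ fun _ => by rw [mem_filter, mem_finAntidiagonal, and_comm]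

theorem finsum_cond_le_eq_sum_Iic {μ R : Type*} [AddCommMonoid R] [Preorder μ]
    [LocallyFiniteOrderBot μ] (P : μ → Prop) [DecidablePred P] (F : μ → R) (c : μ) :
    ∑ᶠ (b : μ) (_ : P b ∧ b ≤ c), F b = ∑ b ∈ Iic c with P b, F b :=
  finsum_cond_eq_sum_of_cond_iff _ fun _ => by rw [mem_filter, mem_Iic, and_comm]

theorem Finset.eq_of_le_of_sum_le_card_mul {ι : Type*} {s : Finset ι} {e : ι → ℕ} {m : ℕ}
    (hle : ∀ i ∈ s, m ≤ e i) (hsum : ∑ i ∈ s, e i ≤ #s * m) (i : ι) (hi : i ∈ s) : e i = m := by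
  have hsum' : ∑ _i ∈ s, m = ∑ i ∈ s, e i := by
    rw [sum_const, smul_eq_mul]
    exact le_antisymm (by simpa using card_nsmul_le_sum s e m hle) hsum
  exact ((sum_eq_sum_iff_of_le hle).1 hsum' i hi).symm

theorem Fin.eq_add_and_succAbove_eq_of_sum_eq {n m k : ℕ} {e : Fin (n + 1) → ℕ}
    (hle : ∀ i, m ≤ e i) (hsum : ∑ i, e i = m * (n + 1) + k) {j : Fin (n + 1)}
    (hj : m + k ≤ e j) : e j = m + k ∧ ∀ i, e (j.succAbove i) = m := by
  rw [Fin.sum_univ_succAbove e j] at hsum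
  have hrest : n * m ≤ ∑ i, e (j.succAbove i) := by
    simpa using card_nsmul_le_sum univ (fun i => e (j.succAbove i)) m fun i _ => hle _
  refine ⟨by nlinarith, fun i => eq_of_le_of_sum_le_card_mul (fun i _ => hle _) ?_ i (mem_univ i)⟩
  rw [card_univ, Fintype.card_fin]
  nlinarith

/-- Either every entry stays below `m + k`, or exactly one entry equals `m + k` and all the
others equal `m`. -/
theorem Fin.eq_ite_add_sum_ite_of_sum_eq {M : Type*} [AddCommMonoid M] {n m k : ℕ}
    {e : Fin (n + 1) → ℕ} (hle : ∀ i, m ≤ e i) (hsum : ∑ i, e i = m * (n + 1) + k) (hk : 1 ≤ k)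
    (x : M) :
    x = (if ∀ i, m ≤ e i ∧ e i ≤ m + k - 1 then x else 0) +
      ∑ j, if e j = m + k ∧ ∀ i, e (j.succAbove i) = m then x else 0 := by
  by_cases hW : ∀ i, m ≤ e i ∧ e i ≤ m + k - 1
  · rw [if_pos hW, sum_eq_zero fun j _ => if_neg fun hS => ?_, add_zero]
    have := (hW j).2
    omega
  · obtain ⟨j, hj⟩ : ∃ j, m + k ≤ e j := by
      obtain ⟨j, hj⟩ := not_forall.1 hW
      exact ⟨j, by have := hle j; omega⟩
    have hspike := eq_add_and_succAbove_eq_of_sum_eq hle hsum hj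
    rw [if_neg hW, zero_add, sum_eq_single j, if_pos hspike]
    · rintro j' - hj'
      obtain ⟨i, rfl⟩ := Fin.exists_succAbove_eq hj'
      refine if_neg fun hS => ?_
      have := hspike.2 i
      omega
    · simp

namespace MvPowerSeries

variable {σ R : Type*} [CommSemiring R]

theorem coeff_pow_eq_sum_finAntidiagonal_s13 [DecidableEq σ] (g : MvPowerSeries σ R) (n : ℕ)
    (c : σ →₀ ℕ) : coeff c (g ^ n) = ∑ d ∈ finAntidiagonal n c, ∏ i, coeff (d i) g := by
  rw [← Fin.prod_const, coeff_prod]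
  exact sum_nbij' (⇑) Finsupp.equivFunOnFinite.symm (by simp [mem_finsuppAntidiag])
    (by simp [mem_finsuppAntidiag]) (by simp) (by simp) (by simp)

theorem sum_filter_finAntidiagonal_succ [DecidableEq σ] {M : Type*} [AddCommMonoid M] {n : ℕ}
    (j : Fin (n + 1)) (c : σ →₀ ℕ) (P : (σ →₀ ℕ) → Prop) [DecidablePred P]
    (Q : (Fin n → σ →₀ ℕ) → Prop) [DecidablePred Q] (F : (σ →₀ ℕ) → (Fin n → σ →₀ ℕ) → M) :
    ∑ d ∈ finAntidiagonal (n + 1) c with P (d j) ∧ Q (j.removeNth d), F (d j) (j.removeNth d) =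
      ∑ b ∈ Iic c with P b, ∑ e ∈ finAntidiagonal n (c - b) with Q e, F b e := by
  rw [sum_sigma']
  refine sum_nbij' (fun d => ⟨d j, j.removeNth d⟩) (fun p => j.insertNth p.1 p.2) ?_ ?_
    (fun d _ => j.insertNth_self_removeNth d) (fun p _ => by simp) (fun _ _ => rfl)
  · intro d hd
    simp only [mem_filter, mem_finAntidiagonal, Fin.sum_univ_succAbove _ j] at hd
    simp only [mem_sigma, mem_filter, mem_Iic, mem_finAntidiagonal, ← hd.1]
    exact ⟨⟨le_self_add, hd.2.1⟩, (add_tsub_cancel_left _ _).symm, hd.2.2⟩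
  · rintro ⟨b, e⟩ hp
    simp only [mem_sigma, mem_filter, mem_Iic, mem_finAntidiagonal] at hp
    obtain ⟨⟨hbc, hP⟩, he, hQ⟩ := hp
    simp only [mem_filter, mem_finAntidiagonal, Fin.sum_univ_succAbove _ j,
      Fin.insertNth_apply_same, Fin.insertNth_apply_succAbove, Fin.removeNth_insertNth]
    exact ⟨by rw [he, add_tsub_cancel_of_le hbc], hP, hQ⟩

variable {g : MvPowerSeries σ R} {m n k : ℕ} {c : σ →₀ ℕ}

theorem le_degree_of_prod_coeff_ne_zero (hg : (m : ℕ∞) ≤ g.order) {ι : Type*} [Fintype ι]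
    {d : ι → σ →₀ ℕ} (hd : ∏ i, coeff (d i) g ≠ 0) (i : ι) : m ≤ (d i).degree := by
  exact_mod_cast hg.trans (order_le fun h => hd (prod_eq_zero (mem_univ i) h))

theorem coeff_pow_of_degree_lt (hg : (m : ℕ∞) ≤ g.order) (hc : c.degree < m * n) :
    coeff c (g ^ n) = 0 := by
  refine coeff_of_lt_order (lt_of_lt_of_le ?_ (le_order_pow n))
  calc (c.degree : ℕ∞) < (m * n : ℕ) := by exact_mod_cast hc
    _ = n • (m : ℕ∞) := by rw [nsmul_eq_mul, mul_comm]; push_cast; rfl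
    _ ≤ n • g.order := nsmul_le_nsmul_right hg n

theorem coeff_pow_of_degree_eq_mul (hg : (m : ℕ∞) ≤ g.order) (hc : c.degree = m * n) :
    coeff c (g ^ n) =
      ∑ᶠ (d : Fin n → σ →₀ ℕ) (_ : (∀ i, (d i).degree = m) ∧ ∑ i, d i = c),
        ∏ i, coeff (d i) g := by
  classical
  rw [finsum_cond_sum_eq_eq_sum_finAntidiagonal, coeff_pow_eq_sum_finAntidiagonal_s13]
  refine (sum_filter_of_ne fun d hd hne i => ?_).symm
  refine eq_of_le_of_sum_le_card_mul (fun i _ => le_degree_of_prod_coeff_ne_zero hg hne i) ?_ i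
    (mem_univ i)
  rw [← map_sum Finsupp.degree, (mem_finAntidiagonal.1 hd), hc, card_univ, Fintype.card_fin,
    mul_comm]

theorem prod_coeff_eq_ite_add_sum_ite (hg : (m : ℕ∞) ≤ g.order) (hk : 1 ≤ k)
    {d : Fin (n + 1) → σ →₀ ℕ} (hd : (∑ i, d i).degree = m * (n + 1) + k) :
    ∏ i, coeff (d i) g =
      (if ∀ i, m ≤ (d i).degree ∧ (d i).degree ≤ m + k - 1 then ∏ i, coeff (d i) g else 0) +
        ∑ j, if (d j).degree = m + k ∧ ∀ i, (j.removeNth d i).degree = m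
          then ∏ i, coeff (d i) g else 0 := by
  by_cases hne : ∏ i, coeff (d i) g = 0
  · simp [hne]
  exact Fin.eq_ite_add_sum_ite_of_sum_eq (le_degree_of_prod_coeff_ne_zero hg hne)
    (by rwa [← map_sum Finsupp.degree]) hk _

theorem coeff_pow_succ_of_degree_eq_add (hg : (m : ℕ∞) ≤ g.order) (hk : 1 ≤ k)
    (hc : c.degree = m * (n + 1) + k) :
    coeff c (g ^ (n + 1)) =
      (∑ᶠ (d : Fin (n + 1) → σ →₀ ℕ)
        (_ : (∀ i, m ≤ (d i).degree ∧ (d i).degree ≤ m + k - 1) ∧ ∑ i, d i = c),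
        ∏ i, coeff (d i) g) +
      ((n + 1 : ℕ) : R) * ∑ᶠ (b : σ →₀ ℕ) (_ : b.degree = m + k ∧ b ≤ c),
        coeff b g * ∑ᶠ (e : Fin n → σ →₀ ℕ) (_ : (∀ i, (e i).degree = m) ∧ ∑ i, e i = c - b),
          ∏ i, coeff (e i) g := by
  classical
  have hspike (j : Fin (n + 1)) :
      ∑ d ∈ finAntidiagonal (n + 1) c with
        (d j).degree = m + k ∧ ∀ i, (j.removeNth d i).degree = m, ∏ i, coeff (d i) g =
      ∑ b ∈ Iic c with b.degree = m + k, coeff b g * ∑ e ∈ finAntidiagonal n (c - b) with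
        ∀ i, (e i).degree = m, ∏ i, coeff (e i) g := by
    simp_rw [mul_sum]
    rw [← sum_filter_finAntidiagonal_succ j c _ (fun e => ∀ i, (e i).degree = m)
      (fun b e => coeff b g * ∏ i, coeff (e i) g)]
    exact sum_congr rfl fun d _ => Fin.prod_univ_succAbove _ j
  simp_rw [finsum_cond_sum_eq_eq_sum_finAntidiagonal, finsum_cond_le_eq_sum_Iic,
    coeff_pow_eq_sum_finAntidiagonal_s13]
  rw [sum_congr rfl fun d hd => prod_coeff_eq_ite_add_sum_ite hg hk
    ((congrArg Finsupp.degree (mem_finAntidiagonal.1 hd)).trans hc), sum_add_distrib, sum_comm]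
  simp_rw [← sum_filter, hspike, sum_const, card_univ, Fintype.card_fin, nsmul_eq_mul]

theorem coeff_pow_succ_of_degree_eq_add_one (hg : (m : ℕ∞) ≤ g.order)
    (hc : c.degree = m * (n + 1) + 1) :
    coeff c (g ^ (n + 1)) =
      ((n + 1 : ℕ) : R) * ∑ᶠ (b : σ →₀ ℕ) (_ : b.degree = m + 1 ∧ b ≤ c),
        coeff b g * ∑ᶠ (e : Fin n → σ →₀ ℕ) (_ : (∀ i, (e i).degree = m) ∧ ∑ i, e i = c - b),
          ∏ i, coeff (e i) g := by
  have hW (d : Fin (n + 1) → σ →₀ ℕ) :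
      ¬((∀ i, m ≤ (d i).degree ∧ (d i).degree ≤ m + 1 - 1) ∧ ∑ i, d i = c) := by
    rintro ⟨hW, hd⟩
    have hdeg : ∀ i ∈ univ, (d i).degree = m := fun i _ =>
      le_antisymm (by simpa using (hW i).2) (hW i).1
    rw [← hd, map_sum, sum_congr rfl hdeg, sum_const, card_univ, Fintype.card_fin, smul_eq_mul,
      mul_comm] at hc
    omega
  rw [coeff_pow_succ_of_degree_eq_add hg le_rfl hc]
  simp only [hW, finsum_false, finsum_zero, zero_add]

end MvPowerSeries

theorem nthRoot_iff_coeff_system_general {q n m : ℕ} (hn : 1 ≤ n)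
    (f g : MvPowerSeries (Fin q) ℝ) (hord : g.order = (m : ℕ∞)) :
    g ^ n = f ↔
      ((∀ c : Fin q →₀ ℕ, c.degree < m * n → MvPowerSeries.coeff c f = 0) ∧
       (∀ c : Fin q →₀ ℕ, c.degree = m * n →
          MvPowerSeries.coeff c f =
            ∑ᶠ (d : Fin n → (Fin q →₀ ℕ))
              (_ : (∀ i, (d i).degree = m) ∧ ∑ i, d i = c),
              ∏ i, MvPowerSeries.coeff (d i) g) ∧
       (∀ c : Fin q →₀ ℕ, c.degree = m * n + 1 →
          MvPowerSeries.coeff c f =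
            (n : ℝ) * ∑ᶠ (b : Fin q →₀ ℕ) (_ : b.degree = m + 1 ∧ b ≤ c),
              MvPowerSeries.coeff b g *
                ∑ᶠ (d : Fin (n - 1) → (Fin q →₀ ℕ))
                  (_ : (∀ i, (d i).degree = m) ∧ ∑ i, d i = c - b),
                  ∏ i, MvPowerSeries.coeff (d i) g) ∧
       (∀ k : ℕ, 2 ≤ k → ∀ c : Fin q →₀ ℕ, c.degree = m * n + k →
          MvPowerSeries.coeff c f =
            (∑ᶠ (d : Fin n → (Fin q →₀ ℕ))
              (_ : (∀ i, m ≤ (d i).degree ∧ (d i).degree ≤ m + k - 1) ∧ ∑ i, d i = c),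
              ∏ i, MvPowerSeries.coeff (d i) g)
            + (n : ℝ) * ∑ᶠ (b : Fin q →₀ ℕ) (_ : b.degree = m + k ∧ b ≤ c),
                MvPowerSeries.coeff b g *
                  ∑ᶠ (d : Fin (n - 1) → (Fin q →₀ ℕ))
                    (_ : (∀ i, (d i).degree = m) ∧ ∑ i, d i = c - b),
                    ∏ i, MvPowerSeries.coeff (d i) g)) := by
  obtain ⟨n, rfl⟩ := Nat.exists_eq_add_of_le' hn
  have hg := hord.ge
  rw [MvPowerSeries.ext_iff]
  constructor
  · intro h
    simp only [← h]
    exact ⟨fun c hc => coeff_pow_of_degree_lt hg hc, fun c hc => coeff_pow_of_degree_eq_mul hg hc,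
      fun c hc => coeff_pow_succ_of_degree_eq_add_one hg hc,
      fun k hk c hc => coeff_pow_succ_of_degree_eq_add hg (by omega) hc⟩
  · rintro ⟨hlt, hmul, hone, hmore⟩ c
    obtain hc | ⟨k, hc⟩ : c.degree < m * (n + 1) ∨ ∃ k, c.degree = m * (n + 1) + k :=
      (lt_or_ge _ _).imp_right Nat.exists_eq_add_of_le
    · rw [coeff_pow_of_degree_lt hg hc, hlt c hc]
    rcases k with _ | _ | k
    · exact (coeff_pow_of_degree_eq_mul hg hc).trans (hmul c hc).symm
    · exact (coeff_pow_succ_of_degree_eq_add_one hg hc).trans (hone c hc).symm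
    · exact (coeff_pow_succ_of_degree_eq_add hg (by omega) hc).trans
        (hmore _ (by omega) c hc).symm

/-- Characterization of `n`-th roots: if `g` has positive order `m`, then `g ^ n = f`
if and only if the coefficients of `f` satisfy the system of equations (i)-(iii)
from the paper (together with the vanishing of all coefficients of degree `< m·n`). -/
theorem nthRoot_iff_coeff_system {q n m : ℕ} (hq : 1 ≤ q) (hn : 1 ≤ n) (hm : 0 < m)
    (f g : MvPowerSeries (Fin q) ℝ) (hord : g.order = (m : ℕ∞)) :
    g ^ n = f ↔
      ((∀ c : Fin q →₀ ℕ, c.degree < m * n → MvPowerSeries.coeff c f = 0) ∧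
       (∀ c : Fin q →₀ ℕ, c.degree = m * n →
          MvPowerSeries.coeff c f =
            ∑ᶠ (d : Fin n → (Fin q →₀ ℕ))
              (_ : (∀ i, (d i).degree = m) ∧ ∑ i, d i = c),
              ∏ i, MvPowerSeries.coeff (d i) g) ∧
       (∀ c : Fin q →₀ ℕ, c.degree = m * n + 1 →
          MvPowerSeries.coeff c f =
            (n : ℝ) * ∑ᶠ (b : Fin q →₀ ℕ) (_ : b.degree = m + 1 ∧ b ≤ c),
              MvPowerSeries.coeff b g *
                ∑ᶠ (d : Fin (n - 1) → (Fin q →₀ ℕ))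
                  (_ : (∀ i, (d i).degree = m) ∧ ∑ i, d i = c - b),
                  ∏ i, MvPowerSeries.coeff (d i) g) ∧
       (∀ k : ℕ, 2 ≤ k → ∀ c : Fin q →₀ ℕ, c.degree = m * n + k →
          MvPowerSeries.coeff c f =
            (∑ᶠ (d : Fin n → (Fin q →₀ ℕ))
              (_ : (∀ i, m ≤ (d i).degree ∧ (d i).degree ≤ m + k - 1) ∧ ∑ i, d i = c),
              ∏ i, MvPowerSeries.coeff (d i) g)
            + (n : ℝ) * ∑ᶠ (b : Fin q →₀ ℕ) (_ : b.degree = m + k ∧ b ≤ c),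
                MvPowerSeries.coeff b g *
                  ∑ᶠ (d : Fin (n - 1) → (Fin q →₀ ℕ))
                    (_ : (∀ i, (d i).degree = m) ∧ ∑ i, d i = c - b),
                    ∏ i, MvPowerSeries.coeff (d i) g)) :=
  nthRoot_iff_coeff_system_general hn f g hord
end

section
/- There exists a formal power series f in 2 variables over ℝ with ord f = 4 whose initial block possesses a square root in MvPowerSeries (Fin 2) ℝ, but such that f itself possesses no square root in MvPowerSeries (Fin 2) ℝ. (Hence the converse of the statement 'if f has an n-th root then its initial block has an n-th root' fails for multivariable formal power series, in contrast to the one-variable case.) -/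
/-- The initial block (homogeneous part of degree `s`) of a two-variable series. -/
noncomputable def initialBlock (f : MvPowerSeries (Fin 2) ℝ) (s : ℕ) :
    MvPowerSeries (Fin 2) ℝ :=
  fun c => if Finsupp.degree c = s then MvPowerSeries.coeff c f else 0

/-!
The example is `x⁴ + y⁵`: its order is `4` and its initial block `x⁴ = (x²)²` is a square.
Giving `x` weight `2` and `y` weight `1`, its weighted order is `5`. Weighted order is additive
on products of power series over a ring without zero divisors, so a square has even weighted
order, and `x⁴ + y⁵` is not a square.
-/

namespace MvPowerSeries

theorem not_isSquare_of_weightedOrder_eq_odd {σ R : Type*} [Semiring R] [NoZeroDivisors R]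
    (w : σ → ℕ) {f : MvPowerSeries σ R} {n : ℕ} (hn : Odd n) (hf : f.weightedOrder w = n) :
    ¬ IsSquare f := by
  rintro ⟨g, rfl⟩
  rw [weightedOrder_mul] at hf
  cases h : g.weightedOrder w with
  | top => simp [h] at hf
  | coe m =>
    rw [h, ← Nat.cast_add, Nat.cast_inj] at hf
    exact Nat.not_even_iff_odd.mpr hn ⟨m, hf.symm⟩

theorem weightedOrder_X_pow {σ R : Type*} [Semiring R] [Nontrivial R] (w : σ → ℕ) (s : σ)
    (n : ℕ) : (X s ^ n : MvPowerSeries σ R).weightedOrder w = n * w s := by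
  rw [X_pow_eq, weightedOrder_monomial_of_ne_zero w one_ne_zero, Finsupp.weight_single]
  simp

theorem order_X_pow {σ R : Type*} [Semiring R] [Nontrivial R] (s : σ) (n : ℕ) :
    (X s ^ n : MvPowerSeries σ R).order = n := by
  rw [X_pow_eq, order_monomial_of_ne_zero one_ne_zero, Finsupp.degree_single]

end MvPowerSeries

open MvPowerSeries

theorem coeff_initialBlock (f : MvPowerSeries (Fin 2) ℝ) (s : ℕ) (c : Fin 2 →₀ ℕ) :
    coeff c (initialBlock f s) = if c.degree = s then coeff c f else 0 :=
  rfl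

theorem initialBlock_add (f g : MvPowerSeries (Fin 2) ℝ) (s : ℕ) :
    initialBlock (f + g) s = initialBlock f s + initialBlock g s := by
  ext c
  simp only [coeff_initialBlock, map_add]
  split_ifs <;> simp

theorem initialBlock_eq_zero_of_lt_order {f : MvPowerSeries (Fin 2) ℝ} {s : ℕ}
    (hs : s < f.order) : initialBlock f s = 0 := by
  ext c
  rw [coeff_initialBlock, map_zero]
  split_ifs with hc
  · exact coeff_of_lt_order (hc ▸ hs)
  · rfl

theorem initialBlock_X_pow (i : Fin 2) (n : ℕ) : initialBlock (X i ^ n) n = X i ^ n := by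
  ext c
  rw [coeff_initialBlock, X_pow_eq, coeff_monomial]
  split_ifs <;> simp_all

/-- There exists a two-variable formal power series over `ℝ` of order `4` whose
initial block possesses a square root, but which itself has no square root.
Hence the converse of "if `f` has an `n`-th root then its initial block has an
`n`-th root" fails for multivariable formal power series. -/
theorem exists_no_sqrt_with_initialBlock_sqrt :
    ∃ f : MvPowerSeries (Fin 2) ℝ,
      f.order = (4 : ℕ∞) ∧
      (∃ r : MvPowerSeries (Fin 2) ℝ, r ^ 2 = initialBlock f 4) ∧
      ¬ ∃ g : MvPowerSeries (Fin 2) ℝ, g ^ 2 = f := by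
  refine ⟨X 0 ^ 4 + X 1 ^ 5, ?_, ⟨X 0 ^ 2, ?_⟩, ?_⟩
  · rw [order_add_of_order_ne] <;> norm_num [order_X_pow]
  · rw [initialBlock_add, initialBlock_X_pow,
      initialBlock_eq_zero_of_lt_order (by rw [order_X_pow]; norm_num), add_zero, ← pow_mul]
  · rintro ⟨g, hg⟩
    have hweight : (X 0 ^ 4 + X 1 ^ 5 : MvPowerSeries (Fin 2) ℝ).weightedOrder ![2, 1] = 5 := by
      rw [weightedOrder_add_of_weightedOrder_ne] <;> norm_num [weightedOrder_X_pow]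
    exact not_isSquare_of_weightedOrder_eq_odd _ (by decide) hweight ⟨g, hg ▸ sq g⟩
end
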